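/- arXiv:1108.4812 — 2 statements merged into one kernel-verified Lean document; each statement's English description precedes it below -/
import Mathlib

section
/- Let 0 < α < θ, let W : [0,∞) → ℝ be nondecreasing with W(0) = 1 (so W ≥ 1) and W(t)e^{−α t} → c ∈ (0,∞) as t → ∞, define W_θ(x) := e^{−θ x} W(x) + θ ∫₀^x W(y) e^{−θ y} dy and m := θ ∫₀^∞ W(y) e^{−θ y} dy. For 0 ≤ x ≤ s define G_O(s, x) := W(s)[θ ∫_x^s (e^{−θ y}/W_θ(y)) dy + e^{−θ s}/W_θ(s)]. Then for every b ∈ (0, 1 − α/θ) and every a ∈ ℝ: lim_{t→∞} e^{α b t} · G_O((1−b)t, α t/θ + a) = (c/m) e^{−θ a}. -/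
open MeasureTheory Filter

/-!
By parts, `W_θ(x) = W(0) + ∫_{(0,x]} e^{-θy} dW(y)`, so `W_θ` increases from `W_θ(0) = 1` to its
limit `m`; the boundary term `e^{-θx} W(x)` vanishes at infinity because `W` grows like `e^{αx}`
with `α < θ`. The bracket in `G_O(s, x)` is a mean of `1 / W_θ` over `[x, s]` with total mass
`e^{-θx}`, hence lies between `e^{-θx} / m` and `e^{-θx} / W_θ(x)`. Along `x = αt/θ + a → ∞`
both bounds are asymptotic to `e^{-θx} / m`, and `e^{αbt} W((1-b)t) e^{-θx} = W(s) e^{-αs} e^{-θa}`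
with `s = (1-b)t`, which tends to `c e^{-θa}`.
-/

open Real Set Topology

/-- `e^{-θx}` times the mean of `f (min (x + τ) s)` for `τ` exponential of rate `θ`. -/
noncomputable def expTail (θ : ℝ) (f : ℝ → ℝ) (x s : ℝ) : ℝ :=
  (θ * ∫ y in x..s, exp (-θ * y) * f y) + exp (-θ * s) * f s

/-- The paper's `W_θ`. -/
noncomputable def truncatedLaplace (θ : ℝ) (W : ℝ → ℝ) (x : ℝ) : ℝ :=
  exp (-θ * x) * W x + θ * ∫ y in (0:ℝ)..x, W y * exp (-θ * y)

lemma integral_exp_neg_mul {θ : ℝ} (hθ : θ ≠ 0) (p q : ℝ) :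
    ∫ y in p..q, exp (-θ * y) = (exp (-θ * p) - exp (-θ * q)) / θ := by
  rw [intervalIntegral.integral_comp_mul_left (fun y => exp y) (neg_ne_zero.2 hθ), integral_exp,
    smul_eq_mul, inv_neg]
  ring

section expTail

variable {θ x s : ℝ}

lemma expTail_const (hθ : θ ≠ 0) (C : ℝ) : expTail θ (fun _ => C) x s = C * exp (-θ * x) := by
  rw [expTail, intervalIntegral.integral_mul_const, integral_exp_neg_mul hθ]
  field_simp
  ring

lemma expTail_mono {f g : ℝ → ℝ} (hθ : 0 ≤ θ) (hxs : x ≤ s)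
    (hf : IntervalIntegrable f volume x s) (hg : IntervalIntegrable g volume x s)
    (hfg : ∀ y ∈ Icc x s, f y ≤ g y) :
    expTail θ f x s ≤ expTail θ g x s := by
  have hint : ∫ y in x..s, exp (-θ * y) * f y ≤ ∫ y in x..s, exp (-θ * y) * g y :=
    intervalIntegral.integral_mono_on hxs (hf.continuousOn_mul (by fun_prop))
      (hg.continuousOn_mul (by fun_prop))
      fun y hy => mul_le_mul_of_nonneg_left (hfg y hy) (exp_nonneg _)
  have hend := hfg s ⟨hxs, le_rfl⟩
  unfold expTail
  gcongr

lemma expTail_le {C : ℝ} {f : ℝ → ℝ} (hθ : 0 < θ) (hxs : x ≤ s)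
    (hf : IntervalIntegrable f volume x s) (hfC : ∀ y ∈ Icc x s, f y ≤ C) :
    expTail θ f x s ≤ C * exp (-θ * x) :=
  (expTail_mono hθ.le hxs hf intervalIntegrable_const hfC).trans_eq (expTail_const hθ.ne' C)

lemma le_expTail {C : ℝ} {f : ℝ → ℝ} (hθ : 0 < θ) (hxs : x ≤ s)
    (hf : IntervalIntegrable f volume x s) (hCf : ∀ y ∈ Icc x s, C ≤ f y) :
    C * exp (-θ * x) ≤ expTail θ f x s :=
  (expTail_const hθ.ne' C).symm.trans_le (expTail_mono hθ.le hxs intervalIntegrable_const hf hCf)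

lemma expTail_inv_mem_Icc {M : ℝ} {g : ℝ → ℝ} (hθ : 0 < θ) (hxs : x ≤ s)
    (hg : MonotoneOn g (Icc x s)) (hgx : 0 < g x) (hgM : ∀ y ∈ Icc x s, g y ≤ M) :
    expTail θ (fun y => (g y)⁻¹) x s ∈ Icc (M⁻¹ * exp (-θ * x)) ((g x)⁻¹ * exp (-θ * x)) := by
  have hpos : ∀ y ∈ Icc x s, 0 < g y := fun y hy => hgx.trans_le (hg ⟨le_rfl, hxs⟩ hy hy.1)
  have hanti : AntitoneOn (fun y => (g y)⁻¹) (Icc x s) := fun u hu v hv huv =>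
    inv_anti₀ (hpos u hu) (hg hu hv huv)
  have hint : IntervalIntegrable (fun y => (g y)⁻¹) volume x s :=
    (uIcc_of_le hxs ▸ hanti).intervalIntegrable
  exact ⟨le_expTail hθ hxs hint fun y hy => inv_anti₀ (hpos y hy) (hgM y hy),
    expTail_le hθ hxs hint fun y hy => hanti ⟨le_rfl, hxs⟩ hy hy.1⟩

end expTail

lemma MonotoneOn.le_of_tendsto_atTop {f : ℝ → ℝ} {a l x : ℝ} (hf : MonotoneOn f (Ici a))
    (hl : Tendsto f atTop (𝓝 l)) (hx : a ≤ x) : f x ≤ l :=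
  ge_of_tendsto hl <| (eventually_ge_atTop x).mono fun _ hy => hf hx (hx.trans hy) hy

lemma eventually_mul_add_mem_Icc {p q : ℝ} (a : ℝ) (hp : 0 < p) (hpq : p < q) :
    ∀ᶠ t in atTop, p * t + a ∈ Icc 0 (q * t) := by
  have hlow := tendsto_atTop_add_const_right _ a (tendsto_id.const_mul_atTop hp)
  have hgap := tendsto_atTop_add_const_right _ (-a) (tendsto_id.const_mul_atTop (sub_pos.2 hpq))
  filter_upwards [hlow.eventually_ge_atTop 0, hgap.eventually_ge_atTop 0] with t h₁ h₂
  simp only [id] at h₁ h₂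
  exact ⟨h₁, by linarith⟩

section truncatedLaplace

variable {α θ c : ℝ} {W : ℝ → ℝ}

lemma intervalIntegrable_mul_exp_neg (hW : MonotoneOn W (Ici 0)) {p q : ℝ}
    (hp : 0 ≤ p) (hq : 0 ≤ q) : IntervalIntegrable (fun y => W y * exp (-θ * y)) volume p q := by
  have hsub : uIcc p q ⊆ Ici 0 := fun y hy => le_min hp hq |>.trans hy.1
  exact (hW.mono hsub).intervalIntegrable.mul_continuousOn (by fun_prop)

lemma truncatedLaplace_eq_add_expTail (hW : MonotoneOn W (Ici 0)) {x₁ x₂ : ℝ}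
    (hx₁ : 0 ≤ x₁) (hx₂ : 0 ≤ x₂) :
    truncatedLaplace θ W x₂ =
      truncatedLaplace θ W x₁ - W x₁ * exp (-θ * x₁) + expTail θ W x₁ x₂ := by
  have hsplit := intervalIntegral.integral_add_adjacent_intervals
    (intervalIntegrable_mul_exp_neg (θ := θ) hW le_rfl hx₁)
    (intervalIntegrable_mul_exp_neg hW hx₁ hx₂)
  have hcomm : ∫ y in x₁..x₂, W y * exp (-θ * y) = ∫ y in x₁..x₂, exp (-θ * y) * W y :=
    intervalIntegral.integral_congr fun y _ => mul_comm _ _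
  rw [truncatedLaplace, truncatedLaplace, expTail, ← hsplit, hcomm]
  ring

lemma monotoneOn_truncatedLaplace (hθ : 0 < θ) (hW : MonotoneOn W (Ici 0)) :
    MonotoneOn (truncatedLaplace θ W) (Ici 0) := by
  intro x₁ hx₁ x₂ hx₂ h₁₂
  have hWint : IntervalIntegrable W volume x₁ x₂ :=
    (hW.mono fun y hy => hx₁.trans (uIcc_of_le h₁₂ ▸ hy).1).intervalIntegrable
  have := le_expTail hθ h₁₂ hWint fun y hy => hW hx₁ (hx₁.trans hy.1) hy.1
  rw [truncatedLaplace_eq_add_expTail hW hx₁ hx₂]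
  linarith

lemma one_le_truncatedLaplace (hθ : 0 < θ) (hW : MonotoneOn W (Ici 0)) (hW0 : W 0 = 1)
    {x : ℝ} (hx : 0 ≤ x) : 1 ≤ truncatedLaplace θ W x := by
  have h0 : truncatedLaplace θ W 0 = 1 := by simp [truncatedLaplace, hW0]
  exact h0 ▸ monotoneOn_truncatedLaplace hθ hW self_mem_Ici hx hx

lemma one_le_of_tendsto_truncatedLaplace {m : ℝ} (hθ : 0 < θ) (hW : MonotoneOn W (Ici 0))
    (hW0 : W 0 = 1) (hm : Tendsto (truncatedLaplace θ W) atTop (𝓝 m)) : 1 ≤ m :=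
  (one_le_truncatedLaplace hθ hW hW0 le_rfl).trans
    ((monotoneOn_truncatedLaplace hθ hW).le_of_tendsto_atTop hm le_rfl)

lemma isBigO_mul_exp_neg (hlim : Tendsto (fun t => W t * exp (-α * t)) atTop (𝓝 c)) :
    (fun t => W t * exp (-θ * t)) =O[atTop] fun t => exp (-(θ - α) * t) := by
  have h := (hlim.isBigO_one ℝ).mul (Asymptotics.isBigO_refl (fun t => exp (-(θ - α) * t)) atTop)
  refine h.congr (fun t => ?_) (fun t => one_mul _)
  rw [mul_assoc, ← exp_add]
  ring_nf

lemma integrableOn_mul_exp_neg_Ioi (hαθ : α < θ) (hW : MonotoneOn W (Ici 0))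
    (hlim : Tendsto (fun t => W t * exp (-α * t)) atTop (𝓝 c)) :
    IntegrableOn (fun y => W y * exp (-θ * y)) (Ioi 0) := by
  have hloc : LocallyIntegrableOn (fun y => W y * exp (-θ * y)) (Ici 0) :=
    (locallyIntegrableOn_iff isClosed_Ici.isLocallyClosed).2 fun k hk hkc =>
      ((hW.mono hk).integrableOn_isCompact hkc).mul_continuousOn (by fun_prop) hkc
  exact (integrableOn_Ici_iff_integrableOn_Ioi (by finiteness)).1 <|
    hloc.integrableOn_of_isBigO_atTop (isBigO_mul_exp_neg hlim)
      ⟨Ioi 0, Ioi_mem_atTop 0, exp_neg_integrableOn_Ioi 0 (sub_pos.2 hαθ)⟩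

lemma tendsto_truncatedLaplace (hαθ : α < θ) (hW : MonotoneOn W (Ici 0))
    (hlim : Tendsto (fun t => W t * exp (-α * t)) atTop (𝓝 c)) :
    Tendsto (truncatedLaplace θ W) atTop (𝓝 (θ * ∫ y in Ioi 0, W y * exp (-θ * y))) := by
  have hdecay : Tendsto (fun x => exp (-θ * x) * W x) atTop (𝓝 0) := by
    refine ((isBigO_mul_exp_neg hlim).trans_tendsto ?_).congr fun x => mul_comm _ _
    exact tendsto_exp_atBot.comp <|
      tendsto_id.const_mul_atTop_of_neg (neg_neg_iff_pos.2 (sub_pos.2 hαθ))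
  have hint := (intervalIntegral_tendsto_integral_Ioi 0
    (integrableOn_mul_exp_neg_Ioi hαθ hW hlim) tendsto_id).const_mul θ
  rw [← zero_add (θ * _)]
  exact hdecay.add hint

lemma mul_expTail_inv_truncatedLaplace_mem_Icc {m : ℝ} (hθ : 0 < θ) (hW : MonotoneOn W (Ici 0))
    (hW0 : W 0 = 1) (hm : Tendsto (truncatedLaplace θ W) atTop (𝓝 m))
    {x s : ℝ} (hx : 0 ≤ x) (hxs : x ≤ s) :
    W s * expTail θ (fun y => (truncatedLaplace θ W y)⁻¹) x s ∈
      Icc (W s * exp (-θ * x) / m) (W s * exp (-θ * x) / truncatedLaplace θ W x) := by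
  have hmono := monotoneOn_truncatedLaplace hθ hW
  have hWs : 0 ≤ W s := zero_le_one.trans (hW0 ▸ hW self_mem_Ici (hx.trans hxs) (hx.trans hxs))
  obtain ⟨hlow, hupp⟩ := expTail_inv_mem_Icc hθ hxs (hmono.mono fun y hy => hx.trans hy.1)
    (one_pos.trans_le (one_le_truncatedLaplace hθ hW hW0 hx))
    fun y hy => hmono.le_of_tendsto_atTop hm (hx.trans hy.1)
  constructor
  · calc W s * exp (-θ * x) / m = W s * (m⁻¹ * exp (-θ * x)) := by ring
      _ ≤ _ := mul_le_mul_of_nonneg_left hlow hWs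
  · calc _ ≤ W s * ((truncatedLaplace θ W x)⁻¹ * exp (-θ * x)) :=
          mul_le_mul_of_nonneg_left hupp hWs
      _ = W s * exp (-θ * x) / truncatedLaplace θ W x := by ring

end truncatedLaplace

lemma exp_mul_exp_neg_mul_div_add {θ : ℝ} (hθ : θ ≠ 0) (α b a t : ℝ) :
    exp (α * b * t) * exp (-θ * (α * t / θ + a)) = exp (-α * ((1 - b) * t)) * exp (-θ * a) := by
  rw [← exp_add, ← exp_add]
  congr 1
  field_simp
  ring

theorem stmt_15_general (α θ c : ℝ) (hα : 0 < α) (hαθ : α < θ)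
    (W : ℝ → ℝ) (hWmono : MonotoneOn W (Set.Ici 0)) (hW0 : W 0 = 1)
    (hlim : Tendsto (fun t => W t * Real.exp (-α * t)) atTop (nhds c))
    (Wθ : ℝ → ℝ)
    (hWθ : ∀ x : ℝ, Wθ x =
      Real.exp (-θ * x) * W x + θ * ∫ y in (0:ℝ)..x, W y * Real.exp (-θ * y))
    (m : ℝ) (hm : m = θ * ∫ y in Set.Ioi (0:ℝ), W y * Real.exp (-θ * y))
    (GO : ℝ → ℝ → ℝ)
    (hGO : ∀ s x, GO s x = W s *
      ((θ * ∫ y in x..s, Real.exp (-θ * y) / Wθ y) + Real.exp (-θ * s) / Wθ s)) :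
    ∀ b : ℝ, 0 < b → b < 1 - α / θ → ∀ a : ℝ,
      Tendsto (fun t => Real.exp (α * b * t) * GO ((1 - b) * t) (α * t / θ + a)) atTop
        (nhds (c / m * Real.exp (-θ * a))) := by
  intro b _ hb' a
  obtain rfl : Wθ = truncatedLaplace θ W := funext hWθ
  have hθ : 0 < θ := hα.trans hαθ
  have hWθm : Tendsto (truncatedLaplace θ W) atTop (𝓝 m) :=
    hm ▸ tendsto_truncatedLaplace hαθ hWmono hlim
  have hm0 : 0 < m := one_pos.trans_le (one_le_of_tendsto_truncatedLaplace hθ hWmono hW0 hWθm)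
  have hGO' : ∀ s x, GO s x = W s * expTail θ (fun y => (truncatedLaplace θ W y)⁻¹) x s :=
    fun s x => by simp only [hGO, expTail, div_eq_mul_inv]
  have hs : Tendsto (fun t => (1 - b) * t) atTop atTop :=
    tendsto_id.const_mul_atTop (by linarith [div_pos hα hθ])
  have hx : Tendsto (fun t => α * t / θ + a) atTop atTop :=
    tendsto_atTop_add_const_right _ a <| (tendsto_id.const_mul_atTop (div_pos hα hθ)).congr
      fun t => by simp only [id]; ring
  have hxs := eventually_mul_add_mem_Icc a (div_pos hα hθ) (show α / θ < 1 - b by linarith)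
  simp only [← mul_div_right_comm] at hxs
  have hscale : ∀ t M, exp (α * b * t) * (W ((1 - b) * t) * exp (-θ * (α * t / θ + a)) / M) =
      W ((1 - b) * t) * exp (-α * ((1 - b) * t)) * exp (-θ * a) / M := fun t M => by
    rw [mul_assoc (W _), ← exp_mul_exp_neg_mul_div_add hθ.ne']
    ring
  have hlow := ((hlim.comp hs).mul_const (exp (-θ * a))).div_const m
  have hupp := ((hlim.comp hs).mul_const (exp (-θ * a))).div (hWθm.comp hx) hm0.ne'
  rw [mul_div_right_comm] at hlow hupp
  refine tendsto_of_tendsto_of_tendsto_of_le_of_le' hlow hupp ?_ ?_ <;>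
    filter_upwards [hxs] with t ⟨hx0, hxst⟩ <;>
    obtain ⟨hlow_t, hupp_t⟩ :=
      mul_expTail_inv_truncatedLaplace_mem_Icc hθ hWmono hW0 hWθm hx0 hxst <;>
    simp only [Function.comp_apply, Pi.div_apply, hGO', ← hscale]
  exacts [mul_le_mul_of_nonneg_left hlow_t (exp_nonneg _),
    mul_le_mul_of_nonneg_left hupp_t (exp_nonneg _)]

/-- Key estimate (4.15) in the proof of Lemma 4.6 (ages of oldest families, `α < θ`):
with `s_t(b) = bt`, `G_O((1−b)t, αt/θ + a) ~ (c/m) e^{−θa} e^{−αbt}` for `0 < b < 1 − α/θ`. -/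
theorem stmt_15 (α θ c : ℝ) (hα : 0 < α) (hαθ : α < θ) (hc : 0 < c)
    (W : ℝ → ℝ) (hWmono : MonotoneOn W (Set.Ici 0)) (hW0 : W 0 = 1)
    (hlim : Tendsto (fun t => W t * Real.exp (-α * t)) atTop (nhds c))
    (Wθ : ℝ → ℝ)
    (hWθ : ∀ x : ℝ, Wθ x =
      Real.exp (-θ * x) * W x + θ * ∫ y in (0:ℝ)..x, W y * Real.exp (-θ * y))
    (m : ℝ) (hm : m = θ * ∫ y in Set.Ioi (0:ℝ), W y * Real.exp (-θ * y))
    (GO : ℝ → ℝ → ℝ)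
    (hGO : ∀ s x, GO s x = W s *
      ((θ * ∫ y in x..s, Real.exp (-θ * y) / Wθ y) + Real.exp (-θ * s) / Wθ s)) :
    ∀ b : ℝ, 0 < b → b < 1 - α / θ → ∀ a : ℝ,
      Tendsto (fun t => Real.exp (α * b * t) * GO ((1 - b) * t) (α * t / θ + a)) atTop
        (nhds (c / m * Real.exp (-θ * a))) :=
  stmt_15_general α θ c hα hαθ W hWmono hW0 hlim Wθ hWθ m hm GO hGO
end

section
/- Let 0 < α < θ, let W : [0,∞) → [1,∞) be nondecreasing with W(0) = 1 and W(t)e^{−αt} → c ∈ (0,∞) as t → ∞, and define W_θ(x) := e^{−θx}W(x) + θ∫₀^x W(y)e^{−θy} dy and m := θ∫₀^∞ W(y)e^{−θy} dy. Then there exists a constant C > 0 such that for all t ≥ 0 and all 0 ≤ s₁ ≤ s₂ ≤ t: e^{−θ s₁} + ∫₀^{s₁} θ e^{−θ z} · (W_θ(s₂) − W_θ(s₁ − z))/W_θ(s₂) dz ≤ C e^{−(θ−α)s₁}. -/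
/-!
Integrating by parts, `W_θ(x) = W(0) + ∫_{(0,x]} e^{-θy} dW(y)`. Hence `W_θ` is nondecreasing
with `W_θ ≥ W(0) ≥ 1`, and since `W(y) = O(e^{αy})` its increments beyond `u` are
`O(e^{-(θ-α)u})`. Bounding the ratio in the integrand by the increment
`W_θ(s₂) - W_θ(s₁ - z) ≤ K e^{-(θ-α)(s₁-z)}` leaves `θ K e^{-(θ-α)s₁} e^{-αz}`, whose integral
over `z ≥ 0` is `θ K e^{-(θ-α)s₁} / α`.
-/

open MeasureTheory Filter Set Real intervalIntegral Topology

noncomputable def laplaceStieltjesUpTo (W : ℝ → ℝ) (θ x : ℝ) : ℝ :=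
  exp (-θ * x) * W x + θ * ∫ y in (0:ℝ)..x, W y * exp (-θ * y)

theorem integral_mul_exp_neg_mul (k u v : ℝ) :
    ∫ y in u..v, k * exp (-k * y) = exp (-k * u) - exp (-k * v) := by
  have hderiv : ∀ y ∈ uIcc u v, HasDerivAt (fun y => -exp (-k * y)) (k * exp (-k * y)) y :=
    fun y _ => ((hasDerivAt_id' y).const_mul (-k)).exp.fun_neg.congr_deriv (by ring)
  rw [integral_eq_sub_of_hasDerivAt hderiv
    ((continuous_const.mul (by fun_prop)).intervalIntegrable _ _)]
  ring

theorem integral_mul_exp_neg_mul_le (k u v : ℝ) :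
    ∫ y in u..v, k * exp (-k * y) ≤ exp (-k * u) :=
  (integral_mul_exp_neg_mul k u v).trans_le (sub_le_self _ (exp_pos _).le)

theorem exists_le_mul_exp_of_tendsto {W : ℝ → ℝ} {α c : ℝ} (hα : 0 ≤ α)
    (hW : MonotoneOn W (Ici 0)) (hlim : Tendsto (fun t => W t * exp (-α * t)) atTop (𝓝 c)) :
    ∃ M, 0 ≤ M ∧ ∀ y, 0 ≤ y → W y ≤ M * exp (α * y) := by
  obtain ⟨T, hT⟩ := eventually_atTop.mp (hlim.eventually (eventually_le_nhds (lt_add_one c)))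
  set T' := max T 0
  refine ⟨max (max (W T') (c + 1)) 0, le_max_right _ _, fun y hy => ?_⟩
  rcases le_total y T' with hyT | hTy
  · calc W y ≤ max (max (W T') (c + 1)) 0 := by
          grw [hW hy (le_max_right T 0) hyT, ← le_max_left, ← le_max_left]
      _ ≤ max (max (W T') (c + 1)) 0 * exp (α * y) :=
          le_mul_of_one_le_right (le_max_right _ _) (one_le_exp (by positivity))
  · calc W y = W y * exp (-α * y) * exp (α * y) := by
          rw [mul_assoc, ← exp_add]; simp
      _ ≤ (c + 1) * exp (α * y) := by grw [hT y ((le_max_left T 0).trans hTy)]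
      _ ≤ max (max (W T') (c + 1)) 0 * exp (α * y) := by
          grw [← le_max_left, ← le_max_right]

section laplaceStieltjesUpTo

variable {W : ℝ → ℝ} {θ : ℝ}

@[simp]
theorem laplaceStieltjesUpTo_zero : laplaceStieltjesUpTo W θ 0 = W 0 := by
  simp [laplaceStieltjesUpTo]

theorem intervalIntegrable_mul_exp_neg_mul (hW : MonotoneOn W (Ici 0)) {a b : ℝ}
    (ha : 0 ≤ a) (hb : 0 ≤ b) :
    IntervalIntegrable (fun y => W y * exp (-θ * y)) volume a b := by
  have hsub : uIcc a b ⊆ Ici 0 := fun x hx => (le_min ha hb).trans hx.1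
  exact (hW.mono hsub).intervalIntegrable.mul_continuousOn (by fun_prop)

theorem laplaceStieltjesUpTo_sub (hW : MonotoneOn W (Ici 0)) {u v : ℝ} (hu : 0 ≤ u)
    (hv : 0 ≤ v) :
    laplaceStieltjesUpTo W θ v - laplaceStieltjesUpTo W θ u =
      exp (-θ * v) * W v - exp (-θ * u) * W u + θ * ∫ y in u..v, W y * exp (-θ * y) := by
  rw [laplaceStieltjesUpTo, laplaceStieltjesUpTo, ← integral_interval_sub_left
    (intervalIntegrable_mul_exp_neg_mul hW le_rfl hv)
    (intervalIntegrable_mul_exp_neg_mul hW le_rfl hu)]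
  ring

theorem monotoneOn_laplaceStieltjesUpTo (hθ : 0 ≤ θ) (hW : MonotoneOn W (Ici 0)) :
    MonotoneOn (laplaceStieltjesUpTo W θ) (Ici 0) := by
  intro u hu v hv huv
  rw [← sub_nonneg, laplaceStieltjesUpTo_sub hW hu hv]
  have hint : W u * (exp (-θ * u) - exp (-θ * v)) ≤ θ * ∫ y in u..v, W y * exp (-θ * y) := by
    rw [← integral_mul_exp_neg_mul, ← intervalIntegral.integral_const_mul,
      ← intervalIntegral.integral_const_mul]
    refine integral_mono_on huv
      (((continuous_const.mul (by fun_prop)).intervalIntegrable _ _).const_mul _)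
      ((intervalIntegrable_mul_exp_neg_mul hW hu hv).const_mul θ) fun y hy => ?_
    have hWuy := hW hu (mem_Ici.mpr (hu.trans hy.1)) hy.1
    have := mul_le_mul_of_nonneg_left hWuy (mul_nonneg hθ (exp_pos (-θ * y)).le)
    linarith
  have := mul_le_mul_of_nonneg_left (hW hu hv huv) (exp_pos (-θ * v)).le
  linarith

theorem laplaceStieltjesUpTo_sub_le {α M : ℝ} (hθ : 0 ≤ θ) (hαθ : α < θ)
    (hW : MonotoneOn W (Ici 0)) (hW₀ : ∀ y, 0 ≤ y → 0 ≤ W y) (hM : 0 ≤ M)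
    (hWM : ∀ y, 0 ≤ y → W y ≤ M * exp (α * y)) {u v : ℝ} (hu : 0 ≤ u) (huv : u ≤ v) :
    laplaceStieltjesUpTo W θ v - laplaceStieltjesUpTo W θ u ≤
      M * (1 + θ / (θ - α)) * exp (-(θ - α) * u) := by
  have hv : 0 ≤ v := hu.trans huv
  have hθα : 0 < θ - α := sub_pos.mpr hαθ
  have hWexp : ∀ y, 0 ≤ y → W y * exp (-θ * y) ≤ M * exp (-(θ - α) * y) := fun y hy =>
    calc W y * exp (-θ * y) ≤ M * exp (α * y) * exp (-θ * y) := by grw [hWM y hy]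
      _ = M * exp (-(θ - α) * y) := by rw [mul_assoc, ← exp_add]; ring_nf
  have hint : θ * ∫ y in u..v, W y * exp (-θ * y) ≤ M * θ / (θ - α) * exp (-(θ - α) * u) := by
    have : ∫ y in u..v, W y * exp (-θ * y)
        ≤ ∫ y in u..v, M / (θ - α) * ((θ - α) * exp (-(θ - α) * y)) := by
      refine integral_mono_on huv (intervalIntegrable_mul_exp_neg_mul hW hu hv)
        ((continuous_const.mul (by fun_prop)).intervalIntegrable _ _) fun y hy => ?_
      rw [← mul_assoc, div_mul_cancel₀ _ hθα.ne']
      exact hWexp y (hu.trans hy.1)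
    rw [intervalIntegral.integral_const_mul] at this
    grw [this, integral_mul_exp_neg_mul_le]
    exact le_of_eq (by ring)
  have hdecay := mul_le_mul_of_nonneg_left
    (exp_le_exp.mpr (by nlinarith : -(θ - α) * v ≤ -(θ - α) * u)) hM
  have hlast : exp (-θ * v) * W v ≤ M * exp (-(θ - α) * v) := by
    rw [mul_comm]; exact hWexp v hv
  have hfirst : 0 ≤ exp (-θ * u) * W u := mul_nonneg (exp_pos _).le (hW₀ u hu)
  rw [laplaceStieltjesUpTo_sub hW hu hv]
  have hsplit : M * (1 + θ / (θ - α)) * exp (-(θ - α) * u) =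
      M * exp (-(θ - α) * u) + M * θ / (θ - α) * exp (-(θ - α) * u) := by ring
  linarith

end laplaceStieltjesUpTo

section

variable {F : ℝ → ℝ} {α θ K : ℝ}

theorem integral_mul_sub_div_le (hα : 0 < α) (hθ : 0 ≤ θ) (hF : MonotoneOn F (Ici 0))
    (hF0 : 1 ≤ F 0) (hK : ∀ u v, 0 ≤ u → u ≤ v → F v - F u ≤ K * exp (-(θ - α) * u))
    {s₁ s₂ : ℝ} (hs₁ : 0 ≤ s₁) (h₁₂ : s₁ ≤ s₂) :
    ∫ z in (0:ℝ)..s₁, θ * exp (-θ * z) * ((F s₂ - F (s₁ - z)) / F s₂)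
      ≤ θ * K / α * exp (-(θ - α) * s₁) := by
  have hs₂ : 0 ≤ s₂ := hs₁.trans h₁₂
  have hFs₂ : 1 ≤ F s₂ := hF0.trans (hF self_mem_Ici hs₂ hs₂)
  have hK0 : 0 ≤ K := by simpa using hK 0 0 le_rfl le_rfl
  have hanti : AntitoneOn (fun z => F (s₁ - z)) (uIcc 0 s₁) := by
    intro x hx y hy hxy
    rw [uIcc_of_le hs₁] at hx hy
    exact hF (mem_Ici.mpr (by linarith [hy.2])) (mem_Ici.mpr (by linarith [hx.2])) (by linarith)
  have hpointwise : ∀ z ∈ Icc 0 s₁, θ * exp (-θ * z) * ((F s₂ - F (s₁ - z)) / F s₂)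
      ≤ θ * K / α * exp (-(θ - α) * s₁) * (α * exp (-α * z)) := by
    rintro z ⟨hz₀, hz₁⟩
    have hD : 0 ≤ F s₂ - F (s₁ - z) :=
      sub_nonneg.mpr (hF (mem_Ici.mpr (by linarith)) hs₂ (by linarith))
    calc θ * exp (-θ * z) * ((F s₂ - F (s₁ - z)) / F s₂)
        ≤ θ * exp (-θ * z) * (K * exp (-(θ - α) * (s₁ - z))) := by
          grw [div_le_self hD hFs₂, hK (s₁ - z) s₂ (by linarith) (by linarith)]
      _ = θ * K * (exp (-θ * z) * exp (-(θ - α) * (s₁ - z))) := by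
          ring
      _ = θ * K * (exp (-(θ - α) * s₁) * exp (-α * z)) := by
          rw [← exp_add, ← exp_add]; ring_nf
      _ = θ * K / α * exp (-(θ - α) * s₁) * (α * exp (-α * z)) := by
          field_simp
  calc ∫ z in (0:ℝ)..s₁, θ * exp (-θ * z) * ((F s₂ - F (s₁ - z)) / F s₂)
      ≤ ∫ z in (0:ℝ)..s₁, θ * K / α * exp (-(θ - α) * s₁) * (α * exp (-α * z)) :=
        integral_mono_on hs₁
          (((intervalIntegrable_const.sub hanti.intervalIntegrable).div_const _).continuousOn_mul
            (by fun_prop))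
          ((continuous_const.mul (by fun_prop)).intervalIntegrable _ _) hpointwise
    _ ≤ θ * K / α * exp (-(θ - α) * s₁) := by
        rw [intervalIntegral.integral_const_mul]
        grw [integral_mul_exp_neg_mul_le]
        simp

theorem exp_add_integral_le_of_sub_le (hα : 0 < α) (hθ : 0 ≤ θ) (hF : MonotoneOn F (Ici 0))
    (hF0 : 1 ≤ F 0) (hK : ∀ u v, 0 ≤ u → u ≤ v → F v - F u ≤ K * exp (-(θ - α) * u))
    {s₁ s₂ : ℝ} (hs₁ : 0 ≤ s₁) (h₁₂ : s₁ ≤ s₂) :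
    exp (-θ * s₁) + ∫ z in (0:ℝ)..s₁, θ * exp (-θ * z) * ((F s₂ - F (s₁ - z)) / F s₂)
      ≤ (1 + θ * K / α) * exp (-(θ - α) * s₁) := by
  have hexp : exp (-θ * s₁) ≤ exp (-(θ - α) * s₁) := exp_le_exp.mpr (by nlinarith)
  have := integral_mul_sub_div_le hα hθ hF hF0 hK hs₁ h₁₂
  linarith

end

theorem stmt_19_general (α θ c : ℝ) (hα : 0 < α) (hαθ : α < θ)
    (W : ℝ → ℝ) (hWmono : MonotoneOn W (Set.Ici 0))
    (hW1 : ∀ x : ℝ, 0 ≤ x → 1 ≤ W x)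
    (hlim : Tendsto (fun t => W t * Real.exp (-α * t)) atTop (nhds c))
    (Wθ : ℝ → ℝ)
    (hWθ : ∀ x : ℝ, Wθ x =
      Real.exp (-θ * x) * W x + θ * ∫ y in (0:ℝ)..x, W y * Real.exp (-θ * y)) :
    ∃ C : ℝ, 0 < C ∧ ∀ t : ℝ, 0 ≤ t → ∀ s₁ s₂ : ℝ, 0 ≤ s₁ → s₁ ≤ s₂ → s₂ ≤ t →
      Real.exp (-θ * s₁)
        + ∫ z in (0:ℝ)..s₁, θ * Real.exp (-θ * z) * ((Wθ s₂ - Wθ (s₁ - z)) / Wθ s₂)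
      ≤ C * Real.exp (-(θ - α) * s₁) := by
  obtain rfl : Wθ = laplaceStieltjesUpTo W θ := funext hWθ
  have hθ : 0 ≤ θ := (hα.trans hαθ).le
  obtain ⟨M, hM, hWM⟩ := exists_le_mul_exp_of_tendsto hα.le hWmono hlim
  have hK₀ : 0 ≤ M * (1 + θ / (θ - α)) :=
    mul_nonneg hM (by have := (sub_pos.mpr hαθ).le; positivity)
  refine ⟨1 + θ * (M * (1 + θ / (θ - α))) / α, by positivity,
    fun _ _ s₁ s₂ hs₁ h₁₂ _ => ?_⟩
  exact exp_add_integral_le_of_sub_le hα hθ (monotoneOn_laplaceStieltjesUpTo hθ hWmono)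
    (by simpa using hW1 0 le_rfl)
    (fun u v hu huv => laplaceStieltjesUpTo_sub_le hθ hαθ hWmono
      (fun y hy => zero_le_one.trans (hW1 y hy)) hM hWM hu huv) hs₁ h₁₂

/-- Intermediate bound from the proof of Lemma 4.6 (subcritical case `α < θ`):
`e^{−θs₁} + ∫₀^{s₁} θ e^{−θz} (W_θ(s₂) − W_θ(s₁−z))/W_θ(s₂) dz ≤ C e^{−(θ−α)s₁}`
uniformly over `0 ≤ s₁ ≤ s₂ ≤ t`. -/
theorem stmt_19 (α θ c : ℝ) (hα : 0 < α) (hαθ : α < θ) (hc : 0 < c)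
    (W : ℝ → ℝ) (hWmono : MonotoneOn W (Set.Ici 0)) (hW0 : W 0 = 1)
    (hW1 : ∀ x : ℝ, 0 ≤ x → 1 ≤ W x)
    (hlim : Tendsto (fun t => W t * Real.exp (-α * t)) atTop (nhds c))
    (Wθ : ℝ → ℝ)
    (hWθ : ∀ x : ℝ, Wθ x =
      Real.exp (-θ * x) * W x + θ * ∫ y in (0:ℝ)..x, W y * Real.exp (-θ * y))
    (m : ℝ) (hm : m = θ * ∫ y in Set.Ioi (0:ℝ), W y * Real.exp (-θ * y)) :
    ∃ C : ℝ, 0 < C ∧ ∀ t : ℝ, 0 ≤ t → ∀ s₁ s₂ : ℝ, 0 ≤ s₁ → s₁ ≤ s₂ → s₂ ≤ t →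
      Real.exp (-θ * s₁)
        + ∫ z in (0:ℝ)..s₁, θ * Real.exp (-θ * z) * ((Wθ s₂ - Wθ (s₁ - z)) / Wθ s₂)
      ≤ C * Real.exp (-(θ - α) * s₁) :=
  stmt_19_general α θ c hα hαθ W hWmono hW1 hlim Wθ hWθ
end
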